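/- Let G be a word hyperbolic group with finite generating set A and H a finitely generated subgroup with finite generating set B. If the inclusion (H,d_B) ⊆ (G,d_A) is a quasi-isometric embedding, then H is a quasiconvex subset of the Cayley graph Γ(G,A): there is ε > 0 such that every d_A-geodesic from 1 to an element h ∈ H lies in the ε-neighborhood of H. -/

import Mathlib

def evalWord {A G : Type} [Group G] (a : A → G) (w : List A) : G :=
  (w.map a).prod

/-- Word length of `g ∈ G` with respect to the marking `a : A → G`. -/
noncomputable def wlen {A G : Type} [Group G] (a : A → G) (g : G) : ℕ :=
  sInf {n | ∃ w : List A, evalWord a w = g ∧ w.length = n}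

/-- The word metric on `G`. -/
noncomputable def wdist {A G : Type} [Group G] (a : A → G) (g h : G) : ℕ :=
  wlen a (g⁻¹ * h)

/-- Word length of an element of a subgroup `H` with respect to a generating set `B ⊆ H`. -/
noncomputable def wordLength {K : Type} [Group K] (S : Set K) (g : K) : ℕ :=
  sInf {n | ∃ w : List K, (∀ x ∈ w, x ∈ S) ∧ w.prod = g ∧ w.length = n}

/-- Gromov's four-point hyperbolicity condition for the word metric. -/
def FourPointHyperbolic {A G : Type} [Group G] (a : A → G) (δ : ℝ) : Prop :=
  ∀ x y z w : G, (wdist a x y : ℝ) + wdist a z w ≤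
    max ((wdist a x z : ℝ) + wdist a y w) ((wdist a x w : ℝ) + wdist a y z) + 2 * δ

/-!
Write `h ∈ H` as a geodesic `B`-word; by the quasi-isometric embedding its prefixes form a
`C`-quasi-geodesic chain in `G` from `1` to `h`, with steps of length at most `2C`. Let `m` be a
point of an `A`-geodesic from `1` to `h` farthest from this chain, at distance `D`. The geodesic
points at distance `≈ D` before and after `m` are within `D` of chain points, and the stretch of
the chain between those has `≲ C D` steps, all outside the ball of radius `D` about `m`.
Bisecting that stretch, the four-point condition bounds its Gromov product at `m` from below by
`D - C - δ log₂ (C D)`, while the geodesic through `m` has Gromov product `0` there. Hence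
`D ≲ C + δ log (C D)`, which bounds `D` in terms of `δ` and `C` alone.
-/

open Filter Topology Metric Set

lemma exists_le_two_pow_le_max (x : ℝ) : ∃ k : ℕ, x ≤ 2 ^ k ∧ (2 : ℝ) ^ k ≤ max 1 (2 * x) := by
  rcases lt_or_ge x 1 with hx | hx
  · exact ⟨0, by simpa using hx.le, by simp⟩
  · obtain ⟨k, hk, hk'⟩ := exists_nat_pow_near hx one_lt_two
    exact ⟨k + 1, hk'.le, le_max_of_le_right (by rw [pow_succ]; linarith)⟩

lemma exists_forall_lt_of_two_pow_le (P Q : ℝ) :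
    ∃ k₀ : ℕ, ∀ k : ℕ, (2 : ℝ) ^ k ≤ P + Q * k → k < k₀ := by
  have hlim : Tendsto (fun k : ℕ => (P + Q * k) / 2 ^ k) atTop (𝓝 0) := by
    have h₁ := (tendsto_const_nhds (x := P)).div_atTop
      (tendsto_pow_atTop_atTop_of_one_lt one_lt_two)
    have h₂ := (tendsto_pow_const_div_const_pow_of_one_lt 1 one_lt_two).const_mul Q
    simpa [add_div, mul_div_assoc] using h₁.add h₂
  obtain ⟨k₀, hk₀⟩ := eventually_atTop.mp (hlim.eventually (gt_mem_nhds one_pos))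
  refine ⟨k₀, fun k hk => not_le.mp fun h => ?_⟩
  have := hk₀ k h
  rw [div_lt_one (by positivity)] at this
  linarith

section Hyperbolic

def IsGromovHyperbolic (X : Type*) [PseudoMetricSpace X] (δ : ℝ) : Prop :=
  ∀ x y z w : X, dist x y + dist z w ≤ max (dist x z + dist y w) (dist x w + dist y z) + 2 * δ

variable {X : Type*} [PseudoMetricSpace X]

noncomputable def gromovProduct (m x y : X) : ℝ :=
  (dist x m + dist y m - dist x y) / 2

lemma gromovProduct_comm (m x y : X) : gromovProduct m x y = gromovProduct m y x := by
  simp only [gromovProduct, dist_comm x y, add_comm (dist x m)]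

lemma gromovProduct_self (m x : X) : gromovProduct m x x = dist x m := by
  simp [gromovProduct]

lemma sub_half_le_gromovProduct {m x y : X} {R K : ℝ} (hx : R ≤ dist x m) (hy : R ≤ dist y m)
    (hxy : dist x y ≤ K) : R - K / 2 ≤ gromovProduct m x y := by
  unfold gromovProduct
  linarith

namespace IsGromovHyperbolic

variable {δ : ℝ} (hX : IsGromovHyperbolic X δ)
include hX

lemma nonneg (x : X) : 0 ≤ δ := by
  simpa using hX x x x x

lemma min_sub_le_gromovProduct (m x y z : X) :
    min (gromovProduct m x z) (gromovProduct m z y) - δ ≤ gromovProduct m x y := by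
  unfold gromovProduct
  rw [dist_comm z y]
  have h := hX x y z m
  rcases max_choice (dist x z + dist y m) (dist x m + dist y z) with he | he <;> rw [he] at h
  · exact (sub_le_sub_right (min_le_left _ _) δ).trans (by linarith)
  · exact (sub_le_sub_right (min_le_right _ _) δ).trans (by linarith)

lemma sub_le_gromovProduct_of_chain (c : ℕ → X) (m : X) {E : ℝ} {k i j : ℕ} (hij : i < j)
    (hk : j - i ≤ 2 ^ k) (hE : ∀ l, i ≤ l → l < j → E ≤ gromovProduct m (c l) (c (l + 1))) :
    E - k * δ ≤ gromovProduct m (c i) (c j) := by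
  have hδ := hX.nonneg m
  induction k generalizing i j with
  | zero =>
    obtain rfl : j = i + 1 := by rw [pow_zero] at hk; omega
    simpa using hE i le_rfl (Nat.lt_succ_self i)
  | succ k ih =>
    rw [pow_succ] at hk
    rcases Nat.lt_or_ge (j - i) 2 with hshort | hlong
    · have := ih hij (by have := Nat.one_le_two_pow (n := k); omega) hE
      push_cast
      linarith
    · set l := (i + j) / 2
      have hleft := ih (i := i) (j := l) (by omega) (by omega) fun l' h₁ h₂ => hE l' h₁ (by omega)
      have hright := ih (i := l) (j := j) (by omega) (by omega) fun l' h₁ h₂ => hE l' (by omega) h₂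
      have := hX.min_sub_le_gromovProduct m (c i) (c j) (c l)
      have := le_min hleft hright
      push_cast
      linarith

lemma min_le_of_gromovProduct_eq_zero {m x y x' y' : X} {D : ℝ}
    (hxy : gromovProduct m x y = 0) (hxx' : dist x x' ≤ D) (hyy' : dist y y' ≤ D)
    (hx : D ≤ dist x m) (hy : D ≤ dist y m) (hx' : D ≤ dist x' m) (hy' : D ≤ dist y' m) :
    min (D / 2) (gromovProduct m x' y') ≤ 2 * δ := by
  have hδ := hX.nonneg m
  have h₁ : D / 2 ≤ gromovProduct m x x' := by
    linarith [sub_half_le_gromovProduct hx hx' hxx']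
  have h₂ : D / 2 ≤ gromovProduct m y' y := by
    linarith [sub_half_le_gromovProduct hy' hy ((dist_comm y' y).trans_le hyy')]
  by_contra! h
  rw [lt_min_iff] at h
  have h₃ : δ < gromovProduct m x' y := by
    have := hX.min_sub_le_gromovProduct m x' y y'
    have := lt_min h.2 (h.1.trans_le h₂)
    linarith
  have h₄ : δ < min (gromovProduct m x x') (gromovProduct m x' y) := lt_min (by linarith) h₃
  have := hX.min_sub_le_gromovProduct m x y x'
  linarith

end IsGromovHyperbolic

def IsDiscreteGeodesic (g : ℕ → X) (L : ℕ) : Prop :=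
  ∀ i j, i ≤ j → j ≤ L → dist (g i) (g j) = (j : ℝ) - i

def IsQuasiGeodesicChain (C : ℝ) (z : ℕ → X) (n : ℕ) : Prop :=
  ∀ i j, i ≤ j → j ≤ n →
    ((j : ℝ) - i) / C - C ≤ dist (z i) (z j) ∧ dist (z i) (z j) ≤ C * ((j : ℝ) - i) + C

variable {g z : ℕ → X} {L n : ℕ} {C δ : ℝ}

lemma IsDiscreteGeodesic.gromovProduct_eq_zero (hg : IsDiscreteGeodesic g L) {i t j : ℕ}
    (hit : i ≤ t) (htj : t ≤ j) (hj : j ≤ L) : gromovProduct (g t) (g i) (g j) = 0 := by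
  unfold gromovProduct
  rw [hg i t hit (htj.trans hj), dist_comm (g j), hg t j htj hj, hg i j (hit.trans htj) hj]
  ring

lemma IsDiscreteGeodesic.le_dist_clamped_steps (hg : IsDiscreteGeodesic g L) {t₀ : ℕ}
    (ht₀ : t₀ ≤ L) {R : ℝ} (h₀ : R ≤ dist (g 0) (g t₀)) (hL : R ≤ dist (g L) (g t₀)) :
    R ≤ dist (g (t₀ - ⌈R⌉₊)) (g t₀) ∧ R ≤ dist (g (min (t₀ + ⌈R⌉₊) L)) (g t₀) := by
  constructor
  · rcases le_total t₀ ⌈R⌉₊ with h | h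
    · rwa [Nat.sub_eq_zero_of_le h]
    · rw [hg _ t₀ (Nat.sub_le t₀ _) ht₀, Nat.cast_sub h, sub_sub_cancel]
      exact Nat.le_ceil R
  · rcases le_total (t₀ + ⌈R⌉₊) L with h | h
    · rw [min_eq_left h, dist_comm, hg t₀ _ (by omega) h]
      push_cast
      linarith [Nat.le_ceil R]
    · rwa [min_eq_right h]

namespace IsQuasiGeodesicChain

variable (hz : IsQuasiGeodesicChain C z n)
include hz

lemma nonneg : 0 ≤ C := by
  simpa using (hz 0 0 le_rfl (Nat.zero_le n)).2

lemma dist_succ_le {j : ℕ} (hj : j < n) : dist (z j) (z (j + 1)) ≤ 2 * C := by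
  have := (hz j (j + 1) j.le_succ hj).2
  push_cast at this
  linarith

lemma sub_le_mul_dist_add (hC : 0 < C) {i j : ℕ} (hij : i ≤ j) (hj : j ≤ n) :
    (j : ℝ) - i ≤ C * (dist (z i) (z j) + C) := by
  have := (hz i j hij hj).1
  rw [div_sub' hC.ne', div_le_iff₀ hC] at this
  linarith

end IsQuasiGeodesicChain

lemma IsGromovHyperbolic.sub_le_gromovProduct_of_isQuasiGeodesicChain
    (hX : IsGromovHyperbolic X δ) (hC : 0 < C) (hz : IsQuasiGeodesicChain C z n) {m : X} {R : ℝ}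
    (hR : ∀ j ≤ n, R ≤ dist (z j) m) {i j k : ℕ} (hi : i ≤ n) (hj : j ≤ n)
    (hk : C * (dist (z i) (z j) + C) ≤ 2 ^ k) :
    R - C - k * δ ≤ gromovProduct m (z i) (z j) := by
  wlog hij : i ≤ j generalizing i j
  · rw [gromovProduct_comm]
    exact this hj hi (by rwa [dist_comm]) (by omega)
  have hkδ : 0 ≤ k * δ := mul_nonneg k.cast_nonneg (hX.nonneg m)
  rcases hij.eq_or_lt with rfl | hlt
  · rw [gromovProduct_self]
    linarith [hR i hi, hz.nonneg]
  have hji : j - i ≤ 2 ^ k := by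
    have := (hz.sub_le_mul_dist_add hC hij hj).trans hk
    rw [← Nat.cast_sub hij] at this
    exact_mod_cast this
  have := hX.sub_le_gromovProduct_of_chain z m (E := R - C) hlt hji fun l hil hlj =>
    (sub_half_le_gromovProduct (hR l (by omega)) (hR (l + 1) (by omega))
      (hz.dist_succ_le (by omega))).trans_eq' (by ring)
  linarith

lemma exists_le_dist_eq_infDist (z : ℕ → X) (n : ℕ) (x : X) :
    ∃ j ≤ n, dist x (z j) = infDist x (z '' Iic n) := by
  obtain ⟨_, ⟨j, hj, rfl⟩, h⟩ :=
    ((finite_Iic n).image z).isCompact.exists_infDist_eq_dist ⟨z 0, 0, Nat.zero_le n, rfl⟩ x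
  exact ⟨j, hj, h.symm⟩

namespace IsGromovHyperbolic

variable (hX : IsGromovHyperbolic X δ) (hC : 0 < C) (hg : IsDiscreteGeodesic g L)
  (hz : IsQuasiGeodesicChain C z n) (h₀ : z 0 = g 0) (hn : z n = g L)
include hX hC hg hz h₀ hn

lemma exists_infDist_le_of_farthest {t₀ : ℕ} (ht₀ : t₀ ≤ L)
    (hmax : ∀ t ≤ L, infDist (g t) (z '' Iic n) ≤ infDist (g t₀) (z '' Iic n)) :
    ∃ k : ℕ, infDist (g t₀) (z '' Iic n) ≤ C + (k + 4) * δ ∧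
      (2 : ℝ) ^ k ≤ max 1 (2 * (C * (4 * infDist (g t₀) (z '' Iic n) + 2 + C))) := by
  set D := infDist (g t₀) (z '' Iic n)
  set m := g t₀
  have hfar : ∀ j ≤ n, D ≤ dist (z j) m := fun j hj =>
    (infDist_le_dist_of_mem (mem_image_of_mem z (mem_Iic.mpr hj))).trans_eq (dist_comm _ _)
  have hnear : ∀ t ≤ L, ∃ j ≤ n, dist (g t) (z j) ≤ D := fun t ht => by
    obtain ⟨j, hj, h⟩ := exists_le_dist_eq_infDist z n (g t)
    exact ⟨j, hj, h ▸ hmax t ht⟩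
  set r := ⌈D⌉₊
  set t₁ := t₀ - r
  set t₂ := min (t₀ + r) L
  obtain ⟨hD₁, hD₂⟩ :=
    hg.le_dist_clamped_steps ht₀ (h₀ ▸ hfar 0 (Nat.zero_le n)) (hn ▸ hfar n le_rfl)
  obtain ⟨i, hi, hi'⟩ := hnear t₁ (by omega)
  obtain ⟨j, hj, hj'⟩ := hnear t₂ (min_le_right _ _)
  have hij : dist (z i) (z j) ≤ 4 * D + 2 := by
    have h₁₂ : (t₂ : ℝ) ≤ t₁ + 2 * r := by exact_mod_cast (show t₂ ≤ t₁ + 2 * r by omega)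
    have hr : (r : ℝ) < D + 1 := Nat.ceil_lt_add_one infDist_nonneg
    calc dist (z i) (z j) ≤ dist (z i) (g t₁) + dist (g t₁) (g t₂) + dist (g t₂) (z j) :=
          dist_triangle4 _ _ _ _
      _ ≤ D + 2 * r + D := by
          rw [dist_comm, hg t₁ t₂ (by omega) (min_le_right _ _)]
          linarith
      _ ≤ 4 * D + 2 := by linarith
  obtain ⟨k, hk, hk'⟩ := exists_le_two_pow_le_max (C * (4 * D + 2 + C))
  refine ⟨k, ?_, hk'⟩
  have hE := hX.sub_le_gromovProduct_of_isQuasiGeodesicChain hC hz hfar hi hj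
    (hk.trans' (by gcongr))
  have hmin := hX.min_le_of_gromovProduct_eq_zero
    (hg.gromovProduct_eq_zero (Nat.sub_le t₀ r) (le_min (by omega) ht₀) (min_le_right _ _))
    hi' hj' hD₁ hD₂ (hfar i hi) (hfar j hj)
  have hδ := hX.nonneg m
  have hkδ : 0 ≤ k * δ := mul_nonneg k.cast_nonneg hδ
  rcases min_le_iff.mp hmin with h | h <;> linarith

end IsGromovHyperbolic

theorem IsGromovHyperbolic.geodesic_near_quasiGeodesicChain (hX : IsGromovHyperbolic X δ)
    (hC : 0 < C) :
    ∃ ε > 0, ∀ (g z : ℕ → X) (L n : ℕ), IsDiscreteGeodesic g L → IsQuasiGeodesicChain C z n →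
      z 0 = g 0 → z n = g L → ∀ t ≤ L, ∃ j ≤ n, dist (g t) (z j) ≤ ε := by
  obtain ⟨k₀, hk₀⟩ :=
    exists_forall_lt_of_two_pow_le (1 + 2 * C * (4 * (C + 4 * δ) + 2 + C)) (8 * C * δ)
  refine ⟨max 1 (C + (k₀ + 4) * δ), lt_max_of_lt_left one_pos,
    fun g z L n hg hz h₀ hn t ht => ?_⟩
  obtain ⟨t₀, ht₀, hmax⟩ := Set.exists_max_image (Iic L) (fun t => infDist (g t) (z '' Iic n))
    (finite_Iic L) ⟨0, Nat.zero_le L⟩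
  set D := infDist (g t₀) (z '' Iic n)
  obtain ⟨k, hD, hk⟩ := hX.exists_infDist_le_of_farthest hC hg hz h₀ hn ht₀ hmax
  have hδ := hX.nonneg (g 0)
  have hkk₀ : k < k₀ := by
    have hCD : C * D ≤ C * (C + (k + 4) * δ) := mul_le_mul_of_nonneg_left hD hC.le
    have hD₀ : 0 ≤ C * D := mul_nonneg hC.le infDist_nonneg
    refine hk₀ k (hk.trans (max_le ?_ ?_)) <;> nlinarith
  obtain ⟨j, hj, hdist⟩ := exists_le_dist_eq_infDist z n (g t)
  refine ⟨j, hj, ?_⟩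
  calc dist (g t) (z j) = infDist (g t) (z '' Iic n) := hdist
    _ ≤ D := hmax t ht
    _ ≤ C + (k + 4) * δ := hD
    _ ≤ C + (k₀ + 4) * δ := by gcongr
    _ ≤ max 1 (C + (k₀ + 4) * δ) := le_max_right _ _

end Hyperbolic

section WordMetric

variable {A G : Type} [Group G] (a : A → G)

lemma evalWord_append (u v : List A) : evalWord a (u ++ v) = evalWord a u * evalWord a v := by
  simp [evalWord]

lemma evalWord_reverse_map {ι : A → A} (hι : ∀ x, a (ι x) = (a x)⁻¹) (w : List A) :
    evalWord a (w.map ι).reverse = (evalWord a w)⁻¹ := by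
  simp [evalWord, List.prod_inv_reverse, Function.comp_def, hι]

lemma wlen_le_length {w : List A} {g : G} (hw : evalWord a w = g) : wlen a g ≤ w.length :=
  Nat.sInf_le ⟨w, hw, rfl⟩

lemma wlen_one : wlen a (1 : G) = 0 :=
  Nat.le_zero.mp (wlen_le_length a (w := []) rfl)

lemma wdist_evalWord_take_le (w : List A) {i j : ℕ} (hij : i ≤ j) :
    wdist a (evalWord a (w.take i)) (evalWord a (w.take j)) ≤ j - i := by
  have hsplit : evalWord a (w.take j) = evalWord a (w.take i) * evalWord a ((w.take j).drop i) := by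
    conv_lhs => rw [← List.take_append_drop i (w.take j)]
    rw [evalWord_append, List.take_take, min_eq_left hij]
  unfold wdist
  calc wlen a _ ≤ ((w.take j).drop i).length :=
        wlen_le_length a (by rw [hsplit, inv_mul_cancel_left])
    _ ≤ j - i := by simp only [List.length_drop, List.length_take]; omega

variable (hgen : ∀ g : G, ∃ w : List A, evalWord a w = g)
include hgen

lemma exists_evalWord_eq_length_eq_wlen (g : G) :
    ∃ w : List A, evalWord a w = g ∧ w.length = wlen a g := by
  obtain ⟨w, hw⟩ := hgen g
  exact Nat.sInf_mem (s := {n | ∃ w : List A, evalWord a w = g ∧ w.length = n}) ⟨_, w, hw, rfl⟩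

lemma wlen_mul_le (g h : G) : wlen a (g * h) ≤ wlen a g + wlen a h := by
  obtain ⟨u, rfl, hu⟩ := exists_evalWord_eq_length_eq_wlen a hgen g
  obtain ⟨v, rfl, hv⟩ := exists_evalWord_eq_length_eq_wlen a hgen h
  rw [← hu, ← hv, ← List.length_append]
  exact wlen_le_length a (evalWord_append a u v)

lemma wdist_triangle (x y z : G) : wdist a x z ≤ wdist a x y + wdist a y z := by
  simpa [wdist, mul_assoc] using wlen_mul_le a hgen (x⁻¹ * y) (y⁻¹ * z)

lemma wdist_evalWord_take {w : List A} (hw : w.length = wlen a (evalWord a w)) {i j : ℕ}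
    (hij : i ≤ j) (hj : j ≤ w.length) :
    wdist a (evalWord a (w.take i)) (evalWord a (w.take j)) = j - i := by
  refine le_antisymm (wdist_evalWord_take_le a w hij) ?_
  have h₁ := wdist_evalWord_take_le a w (Nat.zero_le i)
  have h₂ := wdist_evalWord_take_le a w hj
  have h := (wdist_triangle a hgen (evalWord a (w.take 0)) (evalWord a (w.take i)) _).trans
    (Nat.add_le_add_left
      (wdist_triangle a hgen _ (evalWord a (w.take j)) (evalWord a (w.take w.length))) _)
  simp only [List.take_zero, List.take_length] at h h₁ h₂
  rw [show wdist a (evalWord a []) (evalWord a w) = w.length by simp [wdist, evalWord, hw]] at h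
  omega

variable (hinv : ∀ x : A, ∃ y : A, a y = (a x)⁻¹)
include hinv

lemma wlen_inv (g : G) : wlen a g⁻¹ = wlen a g := by
  choose ι hι using hinv
  have hle : ∀ g : G, wlen a g⁻¹ ≤ wlen a g := fun g => by
    obtain ⟨w, rfl, hw⟩ := exists_evalWord_eq_length_eq_wlen a hgen g
    simpa [hw] using wlen_le_length a (evalWord_reverse_map a hι w)
  exact le_antisymm (hle g) (by simpa using hle g⁻¹)

noncomputable abbrev wordPseudoMetric : PseudoMetricSpace G where
  dist g h := wdist a g h
  dist_self g := by simp [wdist, wlen_one]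
  dist_comm g h := by
    simp only [wdist]
    rw [← wlen_inv a hgen hinv, mul_inv_rev, inv_inv]
  dist_triangle x y z := by exact_mod_cast wdist_triangle a hgen x y z

lemma isDiscreteGeodesic_evalWord_take {w : List A} (hw : w.length = wlen a (evalWord a w)) :
    letI := wordPseudoMetric a hgen hinv
    IsDiscreteGeodesic (fun t => evalWord a (w.take t)) w.length := fun i j hij hj => by
  show (wdist a _ _ : ℝ) = _
  rw [wdist_evalWord_take a hgen hw hij hj, Nat.cast_sub hij]

lemma isQuasiGeodesicChain_map_evalWord_take {K B : Type} [Group K] (b : B → K) (f : K →* G)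
    (hgenK : ∀ k : K, ∃ w : List B, evalWord b w = k) {C : ℝ}
    (hqi : ∀ k : K, (wlen b k : ℝ) / C - C ≤ wlen a (f k) ∧ (wlen a (f k) : ℝ) ≤ C * wlen b k + C)
    {l : List B} (hl : l.length = wlen b (evalWord b l)) :
    letI := wordPseudoMetric a hgen hinv
    IsQuasiGeodesicChain C (fun j => f (evalWord b (l.take j))) l.length := by
  intro i j hij hj
  have hd := wdist_evalWord_take b hgenK hl hij hj
  have := hqi ((evalWord b (l.take i))⁻¹ * evalWord b (l.take j))
  rw [← wdist, hd, Nat.cast_sub hij, map_mul, map_inv] at this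
  exact this

end WordMetric

lemma exists_evalWord_val_eq {K : Type} [Group K] {S : Set K} (hSinv : ∀ x ∈ S, x⁻¹ ∈ S)
    (hS : Subgroup.closure S = ⊤) (g : K) : ∃ w : List S, evalWord Subtype.val w = g := by
  have hg : g ∈ (Subgroup.closure S).toSubmonoid := hS ▸ Subgroup.mem_top g
  rw [Subgroup.closure_toSubmonoid, Set.union_eq_left.mpr fun x hx => by simpa using hSinv _ hx]
    at hg
  obtain ⟨l, hl, rfl⟩ := Submonoid.exists_list_of_mem_closure hg
  lift l to List S using hl
  exact ⟨l, rfl⟩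

lemma wordLength_eq_wlen {K : Type} [Group K] (S : Set K) (g : K) :
    wordLength S g = wlen (Subtype.val : S → K) g := by
  unfold wordLength wlen
  congr 1
  ext n
  constructor
  · rintro ⟨w, hw, rfl, rfl⟩
    lift w to List S using hw
    exact ⟨w, rfl, by simp⟩
  · rintro ⟨w, rfl, rfl⟩
    refine ⟨w.map Subtype.val, fun x hx => ?_, rfl, by simp⟩
    obtain ⟨y, -, rfl⟩ := List.mem_map.mp hx
    exact y.2

theorem quasiconvex_of_qi_embedded_general
    {A G : Type} [Group G] (a : A → G)
    (hinv : ∀ x : A, ∃ y : A, a y = (a x)⁻¹)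
    (hgen : ∀ g : G, ∃ w : List A, evalWord a w = g)
    (δ : ℝ) (hhyp : FourPointHyperbolic a δ)
    (H : Subgroup G) (B : Set H)
    (hBinv : ∀ x ∈ B, x⁻¹ ∈ B) (hBgen : Subgroup.closure B = ⊤)
    (C : ℝ) (hC : 0 < C)
    (hqi : ∀ h : H, (wordLength B h : ℝ) / C - C ≤ wlen a (h : G) ∧
      (wlen a (h : G) : ℝ) ≤ C * wordLength B h + C) :
    ∃ ε : ℝ, 0 < ε ∧ ∀ h : G, h ∈ H → ∀ w : List A, evalWord a w = h →
      w.length = wlen a h → ∀ p : List A, p <+: w →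
        ∃ u : List A, (u.length : ℝ) ≤ ε ∧ evalWord a p * evalWord a u ∈ H := by
  let _ := wordPseudoMetric a hgen hinv
  -- for this metric, `FourPointHyperbolic a δ` unfolds to `IsGromovHyperbolic G δ`
  obtain ⟨ε, hε, hmorse⟩ := IsGromovHyperbolic.geodesic_near_quasiGeodesicChain (X := G) hhyp hC
  refine ⟨ε, hε, fun h hH w hw hlen p hp => ?_⟩
  have hgenB := exists_evalWord_val_eq hBinv hBgen
  obtain ⟨l, hl, hllen⟩ := exists_evalWord_eq_length_eq_wlen Subtype.val hgenB ⟨h, hH⟩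
  simp only [wordLength_eq_wlen] at hqi
  obtain ⟨j, -, hj⟩ := hmorse _ _ w.length l.length
    (isDiscreteGeodesic_evalWord_take a hgen hinv (hw ▸ hlen))
    (isQuasiGeodesicChain_map_evalWord_take a hgen hinv Subtype.val H.subtype hgenB hqi
      (hl ▸ hllen))
    (by simp [evalWord]) (by simp [hw, hl]) p.length hp.length_le
  obtain ⟨u, hu, hulen⟩ := exists_evalWord_eq_length_eq_wlen a hgen
    ((evalWord a (w.take p.length))⁻¹ * H.subtype (evalWord Subtype.val (l.take j)))
  rw [List.prefix_iff_eq_take.mp hp]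
  exact ⟨u, hulen ▸ hj, by simp [hu]⟩

/-- In a word hyperbolic group, a quasi-isometrically embedded subgroup is a quasiconvex
subset of the Cayley graph: geodesics from `1` to elements of `H` stay uniformly close
to `H`. -/
theorem quasiconvex_of_qi_embedded
    {A G : Type} [Fintype A] [Group G] (a : A → G)
    (hinv : ∀ x : A, ∃ y : A, a y = (a x)⁻¹)
    (hgen : ∀ g : G, ∃ w : List A, evalWord a w = g)
    (δ : ℝ) (hδ : 0 ≤ δ) (hhyp : FourPointHyperbolic a δ)
    (H : Subgroup G) (B : Set H)
    (hBfin : B.Finite) (hBinv : ∀ x ∈ B, x⁻¹ ∈ B) (hBgen : Subgroup.closure B = ⊤)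
    (C : ℝ) (hC : 0 < C)
    (hqi : ∀ h : H, (wordLength B h : ℝ) / C - C ≤ wlen a (h : G) ∧
      (wlen a (h : G) : ℝ) ≤ C * wordLength B h + C) :
    ∃ ε : ℝ, 0 < ε ∧ ∀ h : G, h ∈ H → ∀ w : List A, evalWord a w = h →
      w.length = wlen a h → ∀ p : List A, p <+: w →
        ∃ u : List A, (u.length : ℝ) ≤ ε ∧ evalWord a p * evalWord a u ∈ H :=
  quasiconvex_of_qi_embedded_general a hinv hgen δ hhyp H B hBinv hBgen C hC hqi
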